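/- For the Ising model on a Cayley tree of order k (ρ(σ,ω) = σω, spins in {−1,1}), the family of Boltzmann–Gibbs probability kernels ζ_n(σ_n, h) with boundary fields h is consistent if and only if for every vertex x, h_x = Σ_{y ∈ S(x)} f(h_y, θ), where θ = tanh(Jβ) and f(h,θ) = ½ ln[((1+θ)e^{2h}+(1−θ))/((1−θ)e^{2h}+(1+θ))]. -/

import Mathlib

/-!
Summing `ζ_{n+1}(·, h)` over the spins on the sphere `W_{n+1}` factorizes over its vertices:
a vertex `y` with parent spin `s` contributes
`Σ_{u = ±1} exp (Jβ s u + h_y u) = 2 cosh (Jβ s + h_y) = A(h_y) · exp (s f(h_y, θ))`,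
since `exp (2 f(h, tanh c)) = cosh (c + h) / cosh (c - h)`. Grouping the vertices of `W_{n+1}`
by their parents, the marginal of `ζ_{n+1}(·, h)` on `V_n` is `ζ_n(·, h')` with
`h'_x = Σ_{y ∈ S(x)} f(h_y, θ)`; the constant `Π A(h_y)` cancels against the same factor in
`Z_{n+1}^h = (Π A(h_y)) Z_n^{h'}`. So consistency means `ζ_n(·, h') = ζ_n(·, h)` for all `n`.
Taking logarithms, `Σ_{x ∈ W_n} σ(x) (h'_x - h_x)` is then independent of `σ`, and flipping one
spin gives `h' = h` on `W_n`; every vertex lies on some sphere.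
-/

open scoped BigOperators

variable {V : Type*} [DecidableEq V]

/-- Spheres `Wₙ` around the root of a rooted tree with children map `S`. -/
def treeSphere (root : V) (S : V → Finset V) : ℕ → Finset V
  | 0 => {root}
  | n + 1 => (treeSphere root S n).biUnion S

/-- Balls `Vₙ = W₀ ∪ ⋯ ∪ Wₙ`. -/
def treeBall (root : V) (S : V → Finset V) (n : ℕ) : Finset V :=
  (Finset.range (n + 1)).biUnion (treeSphere root S)

/-- The Cayley tree of order `k`, rooted at `root`, with children map `S`. -/
structure CayleyTree (V : Type*) [DecidableEq V] (k : ℕ) where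
  root : V
  S : V → Finset V
  card_S_root : (S root).card = k + 1
  card_S : ∀ x, x ≠ root → (S x).card = k
  root_not_child : ∀ x, root ∉ S x
  parent_unique : ∀ y, y ≠ root → ∃! x, y ∈ S x
  reach : ∀ y, ∃ n, y ∈ treeSphere root S n

variable {k : ℕ} (T : CayleyTree V k)

/-- The exponent of the kernel (2.6):
`Jβ Σ_{⟨x,y⟩ ⊆ Vₙ} ρ(σ(x),σ(y)) + Σ_{x ∈ Wₙ} ρ(σ(x), h_x)`;
spins take values in `{-1,1} ≃ ℤˣ`. -/
noncomputable def kernelEnergy (J β : ℝ) (ρ : ℤˣ → ℝ → ℝ) (h : V → ℝ)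
    (n : ℕ) (σ : V → ℤˣ) : ℝ :=
  J * β * ∑ x ∈ treeBall T.root T.S n, ∑ y ∈ T.S x ∩ treeBall T.root T.S n,
      ρ (σ x) ((σ y : ℤ) : ℝ)
    + ∑ x ∈ treeSphere T.root T.S n, ρ (σ x) (h x)

/-- Extend a configuration on the ball `Vₙ` to all of `V` (by `+1` outside;
the energy only depends on coordinates in `Vₙ`). -/
def extendBall (n : ℕ) (τ : treeBall T.root T.S n → ℤˣ) : V → ℤˣ :=
  fun x => if hx : x ∈ treeBall T.root T.S n then τ ⟨x, hx⟩ else 1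

/-- The partition function `Z_n^h`. -/
noncomputable def partFn (J β : ℝ) (ρ : ℤˣ → ℝ → ℝ) (h : V → ℝ) (n : ℕ) : ℝ :=
  ∑ τ : treeBall T.root T.S n → ℤˣ,
    Real.exp (kernelEnergy T J β ρ h n (extendBall T n τ))

/-- The kernel (2.6): `ζₙ(σₙ, h) = (Z_n^h)⁻¹ exp( … )`. -/
noncomputable def kernel (J β : ℝ) (ρ : ℤˣ → ℝ → ℝ) (h : V → ℝ) (n : ℕ)
    (τ : treeBall T.root T.S n → ℤˣ) : ℝ :=
  Real.exp (kernelEnergy T J β ρ h n (extendBall T n τ)) / partFn T J β ρ h n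

/-- The configuration on `V_{n+1}` built from `σ` on `Vₙ` and `ω` on the
sphere `W_{n+1}`. -/
def mergeConf (n : ℕ) (σ : treeBall T.root T.S n → ℤˣ)
    (ω : treeSphere T.root T.S (n + 1) → ℤˣ) :
    treeBall T.root T.S (n + 1) → ℤˣ :=
  fun x => if hx : (x : V) ∈ treeBall T.root T.S n then σ ⟨x, hx⟩
    else if hx' : (x : V) ∈ treeSphere T.root T.S (n + 1) then ω ⟨x, hx'⟩
    else 1

/-- The Cayley-tree Ising recursion function
`f(h,θ) = ½ ln[((1+θ)e^{2h}+(1−θ))/((1−θ)e^{2h}+(1+θ))]`. -/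
noncomputable def isingF (h θ : ℝ) : ℝ :=
  (1 / 2) * Real.log (((1 + θ) * Real.exp (2 * h) + (1 - θ)) /
    ((1 - θ) * Real.exp (2 * h) + (1 + θ)))

section Tree

variable {root : V} {S : V → Finset V}

theorem mem_treeSphere_succ {n : ℕ} {y : V} :
    y ∈ treeSphere root S (n + 1) ↔ ∃ x ∈ treeSphere root S n, y ∈ S x :=
  Finset.mem_biUnion

theorem mem_treeBall {n : ℕ} {y : V} :
    y ∈ treeBall root S n ↔ ∃ m ≤ n, y ∈ treeSphere root S m := by
  simp [treeBall]

theorem treeSphere_subset_treeBall (n : ℕ) : treeSphere root S n ⊆ treeBall root S n :=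
  fun _ hy => mem_treeBall.2 ⟨n, le_rfl, hy⟩

theorem treeBall_subset_treeBall_succ (n : ℕ) : treeBall root S n ⊆ treeBall root S (n + 1) :=
  Finset.biUnion_subset_biUnion_of_subset_left _ (Finset.range_subset_range.2 (n + 1).le_succ)

theorem treeBall_succ (n : ℕ) :
    treeBall root S (n + 1) = treeBall root S n ∪ treeSphere root S (n + 1) := by
  rw [treeBall, Finset.range_add_one, Finset.biUnion_insert, Finset.union_comm, treeBall]

end Tree

namespace CayleyTree

theorem eq_of_mem_S {x x' y : V} (hx : y ∈ T.S x) (hx' : y ∈ T.S x') : x = x' := by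
  have hy : y ≠ T.root := by rintro rfl; exact T.root_not_child x hx
  exact (T.parent_unique y hy).unique hx hx'

theorem pairwiseDisjoint_S (s : Set V) : s.PairwiseDisjoint T.S :=
  fun _ _ _ _ hne => Finset.disjoint_left.2 fun _ hx hx' => hne (T.eq_of_mem_S hx hx')

theorem eq_of_mem_treeSphere {m n : ℕ} {y : V} (hm : y ∈ treeSphere T.root T.S m)
    (hn : y ∈ treeSphere T.root T.S n) : m = n := by
  induction m generalizing y n with
  | zero =>
    cases n with
    | zero => rfl
    | succ n =>
      obtain ⟨x, -, hx⟩ := mem_treeSphere_succ.1 hn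
      rw [treeSphere, Finset.mem_singleton] at hm
      exact absurd (hm ▸ hx) (T.root_not_child x)
  | succ m ih =>
    obtain ⟨x, hxm, hx⟩ := mem_treeSphere_succ.1 hm
    cases n with
    | zero =>
      rw [treeSphere, Finset.mem_singleton] at hn
      exact absurd (hn ▸ hx) (T.root_not_child x)
    | succ n =>
      obtain ⟨x', hxn, hx'⟩ := mem_treeSphere_succ.1 hn
      obtain rfl := T.eq_of_mem_S hx hx'
      rw [ih hxm hxn]

theorem disjoint_treeBall_treeSphere_succ (n : ℕ) :
    Disjoint (treeBall T.root T.S n) (treeSphere T.root T.S (n + 1)) := by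
  refine Finset.disjoint_left.2 fun y hy hy' => ?_
  obtain ⟨m, hm, hym⟩ := mem_treeBall.1 hy
  have := T.eq_of_mem_treeSphere hym hy'
  omega

theorem sum_treeBall {M : Type*} [AddCommMonoid M] (F : V → M) (n : ℕ) :
    ∑ x ∈ treeBall T.root T.S n, F x
      = ∑ m ∈ Finset.range (n + 1), ∑ x ∈ treeSphere T.root T.S m, F x :=
  Finset.sum_biUnion fun _ _ _ _ hne => Finset.disjoint_left.2 fun _ hm hm' =>
    hne (T.eq_of_mem_treeSphere hm hm')

theorem sum_treeSphere_succ {M : Type*} [AddCommMonoid M] (F : V → M) (n : ℕ) :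
    ∑ y ∈ treeSphere T.root T.S (n + 1), F y
      = ∑ x ∈ treeSphere T.root T.S n, ∑ y ∈ T.S x, F y :=
  Finset.sum_biUnion (T.pairwiseDisjoint_S _)

theorem S_inter_treeBall {m n : ℕ} {x : V} (hx : x ∈ treeSphere T.root T.S m) :
    T.S x ∩ treeBall T.root T.S n = if m < n then T.S x else ∅ := by
  ext y
  constructor
  · intro hy
    rw [Finset.mem_inter] at hy
    obtain ⟨m', hm', hym'⟩ := mem_treeBall.1 hy.2
    have := T.eq_of_mem_treeSphere (mem_treeSphere_succ.2 ⟨x, hx, hy.1⟩) hym'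
    rw [if_pos (by omega)]
    exact hy.1
  · split_ifs with hmn
    · exact fun hy => Finset.mem_inter.2
        ⟨hy, mem_treeBall.2 ⟨m + 1, hmn, mem_treeSphere_succ.2 ⟨x, hx, hy⟩⟩⟩
    · simp

open Classical in
noncomputable def parent (y : V) : V :=
  if hy : ∃ x, y ∈ T.S x then hy.choose else T.root

theorem parent_eq {x y : V} (hy : y ∈ T.S x) : T.parent y = x := by
  have hex : ∃ x, y ∈ T.S x := ⟨x, hy⟩
  rw [parent, dif_pos hex]
  exact T.eq_of_mem_S hex.choose_spec hy

theorem parent_mem_treeSphere {n : ℕ} {y : V} (hy : y ∈ treeSphere T.root T.S (n + 1)) :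
    T.parent y ∈ treeSphere T.root T.S n := by
  obtain ⟨x, hx, hyx⟩ := mem_treeSphere_succ.1 hy
  rwa [T.parent_eq hyx]

theorem sum_treeSphere_succ_parent {M : Type*} [AddCommMonoid M] (G : V → V → M) (n : ℕ) :
    ∑ y ∈ treeSphere T.root T.S (n + 1), G (T.parent y) y
      = ∑ x ∈ treeSphere T.root T.S n, ∑ y ∈ T.S x, G x y := by
  rw [sum_treeSphere_succ]
  exact Finset.sum_congr rfl fun x _ => Finset.sum_congr rfl fun y hy => by rw [T.parent_eq hy]

end CayleyTree

section Energy

variable (J β : ℝ) (ρ : ℤˣ → ℝ → ℝ)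

def bondEnergy (n : ℕ) (ξ : V → ℤˣ) : ℝ :=
  ∑ x ∈ treeBall T.root T.S n, ∑ y ∈ T.S x ∩ treeBall T.root T.S n,
    ρ (ξ x) ((ξ y : ℤ) : ℝ)

theorem kernelEnergy_eq (h : V → ℝ) (n : ℕ) (ξ : V → ℤˣ) :
    kernelEnergy T J β ρ h n ξ
      = J * β * bondEnergy T ρ n ξ + ∑ x ∈ treeSphere T.root T.S n, ρ (ξ x) (h x) :=
  rfl

theorem bondEnergy_eq_sum_range (n : ℕ) (ξ : V → ℤˣ) :
    bondEnergy T ρ n ξ = ∑ m ∈ Finset.range n, ∑ x ∈ treeSphere T.root T.S m,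
      ∑ y ∈ T.S x, ρ (ξ x) ((ξ y : ℤ) : ℝ) := by
  have hlast : ∑ x ∈ treeSphere T.root T.S n, ∑ y ∈ T.S x ∩ treeBall T.root T.S n,
      ρ (ξ x) ((ξ y : ℤ) : ℝ) = 0 :=
    Finset.sum_eq_zero fun x hx => by
      rw [T.S_inter_treeBall hx, if_neg (lt_irrefl n), Finset.sum_empty]
  rw [bondEnergy, T.sum_treeBall, Finset.sum_range_succ, hlast, add_zero]
  exact Finset.sum_congr rfl fun m hm => Finset.sum_congr rfl fun x hx => by
    rw [T.S_inter_treeBall hx, if_pos (Finset.mem_range.1 hm)]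

theorem bondEnergy_succ (n : ℕ) (ξ : V → ℤˣ) :
    bondEnergy T ρ (n + 1) ξ = bondEnergy T ρ n ξ
      + ∑ y ∈ treeSphere T.root T.S (n + 1), ρ (ξ (T.parent y)) ((ξ y : ℤ) : ℝ) := by
  rw [bondEnergy_eq_sum_range, bondEnergy_eq_sum_range, Finset.sum_range_succ,
    T.sum_treeSphere_succ_parent fun x y => ρ (ξ x) ((ξ y : ℤ) : ℝ)]

theorem bondEnergy_congr {n : ℕ} {ξ ξ' : V → ℤˣ}
    (hξ : ∀ x ∈ treeBall T.root T.S n, ξ x = ξ' x) :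
    bondEnergy T ρ n ξ = bondEnergy T ρ n ξ' :=
  Finset.sum_congr rfl fun x hx => Finset.sum_congr rfl fun y hy => by
    rw [hξ x hx, hξ y (Finset.mem_inter.1 hy).2]

theorem partFn_pos (h : V → ℝ) (n : ℕ) : 0 < partFn T J β ρ h n :=
  Finset.sum_pos (fun _ _ => Real.exp_pos _) Finset.univ_nonempty

theorem log_kernel (h : V → ℝ) (n : ℕ) (τ : treeBall T.root T.S n → ℤˣ) :
    Real.log (kernel T J β ρ h n τ)
      = kernelEnergy T J β ρ h n (extendBall T n τ) - Real.log (partFn T J β ρ h n) := by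
  rw [kernel, Real.log_div (Real.exp_pos _).ne' (partFn_pos T J β ρ h n).ne', Real.log_exp]

end Energy

section Merge

variable {n : ℕ} (σ : treeBall T.root T.S n → ℤˣ)
  (ω : treeSphere T.root T.S (n + 1) → ℤˣ)

theorem extendBall_mergeConf_of_mem_treeBall {x : V} (hx : x ∈ treeBall T.root T.S n) :
    extendBall T (n + 1) (mergeConf T n σ ω) x = extendBall T n σ x := by
  simp [extendBall, mergeConf, hx, treeBall_subset_treeBall_succ n hx]

theorem extendBall_mergeConf_of_mem_treeSphere {x : V} (hx : x ∈ treeSphere T.root T.S (n + 1)) :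
    extendBall T (n + 1) (mergeConf T n σ ω) x = ω ⟨x, hx⟩ := by
  have hx' : x ∉ treeBall T.root T.S n :=
    Finset.disjoint_right.1 (T.disjoint_treeBall_treeSphere_succ n) hx
  simp [extendBall, mergeConf, hx, hx', treeSphere_subset_treeBall _ hx]

def mergeEquiv (n : ℕ) :
    (treeBall T.root T.S n → ℤˣ) × (treeSphere T.root T.S (n + 1) → ℤˣ) ≃
      (treeBall T.root T.S (n + 1) → ℤˣ) where
  toFun p := mergeConf T n p.1 p.2
  invFun τ := (fun x => τ ⟨x, treeBall_subset_treeBall_succ n x.2⟩,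
    fun x => τ ⟨x, treeSphere_subset_treeBall _ x.2⟩)
  left_inv p := by
    have hx' : ∀ x : treeSphere T.root T.S (n + 1), (x : V) ∉ treeBall T.root T.S n :=
      fun x => Finset.disjoint_right.1 (T.disjoint_treeBall_treeSphere_succ n) x.2
    ext x <;> simp [mergeConf, hx']
  right_inv τ := by
    funext x
    have hx : (x : V) ∈ treeBall T.root T.S n ∪ treeSphere T.root T.S (n + 1) :=
      treeBall_succ (root := T.root) (S := T.S) n ▸ x.2
    rw [Finset.mem_union] at hx
    by_cases hxn : (x : V) ∈ treeBall T.root T.S n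
    · simp [mergeConf, hxn]
    · simp [mergeConf, hxn, hx.resolve_left hxn]

theorem sum_mergeConf {M : Type*} [AddCommMonoid M]
    (F : (treeBall T.root T.S (n + 1) → ℤˣ) → M) :
    ∑ σ, ∑ ω, F (mergeConf T n σ ω) = ∑ τ, F τ := by
  rw [← Fintype.sum_prod_type']
  exact (mergeEquiv T n).sum_comp F

end Merge

theorem sum_exp_kernelEnergy_mergeConf (J β : ℝ) (ρ : ℤˣ → ℝ → ℝ) (h : V → ℝ) (n : ℕ)
    (σ : treeBall T.root T.S n → ℤˣ) :
    ∑ ω, Real.exp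
        (kernelEnergy T J β ρ h (n + 1) (extendBall T (n + 1) (mergeConf T n σ ω)))
      = Real.exp (J * β * bondEnergy T ρ n (extendBall T n σ)) *
        ∏ y ∈ treeSphere T.root T.S (n + 1), ∑ u : ℤˣ,
          Real.exp (J * β * ρ (extendBall T n σ (T.parent y)) ((u : ℤ) : ℝ) + ρ u (h y)) := by
  have hE : ∀ ω, kernelEnergy T J β ρ h (n + 1) (extendBall T (n + 1) (mergeConf T n σ ω))
      = J * β * bondEnergy T ρ n (extendBall T n σ)
        + ∑ y : treeSphere T.root T.S (n + 1),
          (J * β * ρ (extendBall T n σ (T.parent y)) ((ω y : ℤ) : ℝ) + ρ (ω y) (h y)) := by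
    intro ω
    rw [kernelEnergy_eq, bondEnergy_succ,
      bondEnergy_congr T ρ fun x => extendBall_mergeConf_of_mem_treeBall T σ ω,
      mul_add, add_assoc, Finset.mul_sum, ← Finset.sum_add_distrib, ← Finset.sum_coe_sort]
    refine congrArg _ (Finset.sum_congr rfl fun y _ => ?_)
    rw [extendBall_mergeConf_of_mem_treeSphere T σ ω y.2,
      extendBall_mergeConf_of_mem_treeBall T σ ω
      (treeSphere_subset_treeBall n (T.parent_mem_treeSphere y.2))]
  rw [← Finset.prod_coe_sort, Fintype.prod_sum, Finset.mul_sum]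
  refine Finset.sum_congr rfl fun ω _ => ?_
  rw [hE, Real.exp_add, Real.exp_sum]

namespace Ising

noncomputable def prefactor (c t : ℝ) : ℝ :=
  2 * Real.cosh (c + t) * Real.exp (-isingF t (Real.tanh c))

theorem prefactor_pos (c t : ℝ) : 0 < prefactor c t := by
  have := Real.cosh_pos (c + t)
  unfold prefactor
  positivity

theorem one_add_tanh_mul_exp_add_one_sub_tanh (c t : ℝ) :
    (1 + Real.tanh c) * Real.exp (2 * t) + (1 - Real.tanh c)
      = 2 * Real.exp t * Real.cosh (c + t) / Real.cosh c := by
  have hc := (Real.cosh_pos c).ne'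
  rw [Real.tanh_eq_sinh_div_cosh, Real.cosh_eq (c + t)]
  field_simp
  have h₁ : Real.exp t * Real.exp (c + t) = Real.exp (2 * t) * Real.exp c := by
    rw [← Real.exp_add, ← Real.exp_add]; ring_nf
  have h₂ : Real.exp t * Real.exp (-(c + t)) = Real.exp (-c) := by
    rw [← Real.exp_add]; ring_nf
  linear_combination Real.exp (2 * t) * Real.cosh_add_sinh c + Real.cosh_sub_sinh c - h₁ - h₂

theorem exp_two_mul_isingF_tanh (c t : ℝ) :
    Real.exp (2 * isingF t (Real.tanh c)) = Real.cosh (c + t) / Real.cosh (c - t) := by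
  have hratio : ((1 + Real.tanh c) * Real.exp (2 * t) + (1 - Real.tanh c)) /
      ((1 - Real.tanh c) * Real.exp (2 * t) + (1 + Real.tanh c))
        = Real.cosh (c + t) / Real.cosh (c - t) := by
    have hden : (1 - Real.tanh c) * Real.exp (2 * t) + (1 + Real.tanh c)
        = 2 * Real.exp t * Real.cosh (c - t) / Real.cosh c := by
      have := one_add_tanh_mul_exp_add_one_sub_tanh (-c) t
      rwa [Real.tanh_neg, Real.cosh_neg, ← Real.cosh_neg (-c + t), neg_add_eq_sub, neg_sub,
        ← sub_eq_add_neg, sub_neg_eq_add] at this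
    rw [one_add_tanh_mul_exp_add_one_sub_tanh, hden]
    field_simp [(Real.cosh_pos c).ne', (Real.exp_pos t).ne']
  have hpos : 0 < Real.cosh (c + t) / Real.cosh (c - t) :=
    div_pos (Real.cosh_pos _) (Real.cosh_pos _)
  rw [isingF, ← mul_assoc, show (2 : ℝ) * (1 / 2) = 1 by norm_num, one_mul,
    Real.exp_log (hratio ▸ hpos), hratio]

theorem sum_units_exp (c t : ℝ) (s : ℤˣ) :
    ∑ u : ℤˣ, Real.exp (c * (((s : ℤ) : ℝ) * ((u : ℤ) : ℝ)) + ((u : ℤ) : ℝ) * t)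
      = prefactor c t * Real.exp (((s : ℤ) : ℝ) * isingF t (Real.tanh c)) := by
  have hsum :
      ∑ u : ℤˣ, Real.exp (c * (((s : ℤ) : ℝ) * ((u : ℤ) : ℝ)) + ((u : ℤ) : ℝ) * t)
        = 2 * Real.cosh (c * ((s : ℤ) : ℝ) + t) := by
    rw [show (Finset.univ : Finset ℤˣ) = {1, -1} from rfl, Finset.sum_pair (by decide),
      Real.cosh_eq]
    push_cast
    ring_nf
  rw [hsum, prefactor, mul_assoc, ← Real.exp_add]
  rcases Int.units_eq_one_or s with rfl | rfl
  · simp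
  · have hc := (Real.cosh_pos (c + t)).ne'
    push_cast
    rw [show -isingF t (Real.tanh c) + -1 * isingF t (Real.tanh c)
        = -(2 * isingF t (Real.tanh c)) by ring,
      Real.exp_neg, exp_two_mul_isingF_tanh, ← Real.cosh_neg, show -(c * -1 + t) = c - t by ring]
    field_simp

local notation "isingρ" => fun (u : ℤˣ) (r : ℝ) => ((u : ℤ) : ℝ) * r

noncomputable def fieldRecursion (θ : ℝ) (h : V → ℝ) (x : V) : ℝ :=
  ∑ y ∈ T.S x, isingF (h y) θ

theorem prod_sum_units_exp_treeSphere (J β : ℝ) (h : V → ℝ) (n : ℕ) (η : V → ℤˣ) :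
    ∏ y ∈ treeSphere T.root T.S (n + 1), ∑ u : ℤˣ,
        Real.exp
          (J * β * (((η (T.parent y) : ℤ) : ℝ) * ((u : ℤ) : ℝ)) + ((u : ℤ) : ℝ) * h y)
      = (∏ y ∈ treeSphere T.root T.S (n + 1), prefactor (J * β) (h y)) *
        Real.exp (∑ x ∈ treeSphere T.root T.S n,
          ((η x : ℤ) : ℝ) * fieldRecursion T (Real.tanh (J * β)) h x) := by
  calc _ = ∏ y ∈ treeSphere T.root T.S (n + 1), prefactor (J * β) (h y) *
          Real.exp (((η (T.parent y) : ℤ) : ℝ) * isingF (h y) (Real.tanh (J * β))) :=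
        Finset.prod_congr rfl fun y _ => sum_units_exp _ _ _
    _ = _ := by
      rw [Finset.prod_mul_distrib, ← Real.exp_sum, T.sum_treeSphere_succ_parent
        fun x y => ((η x : ℤ) : ℝ) * isingF (h y) (Real.tanh (J * β))]
      simp only [fieldRecursion, Finset.mul_sum]

theorem sum_exp_kernelEnergy_mergeConf (J β : ℝ) (h : V → ℝ) (n : ℕ)
    (σ : treeBall T.root T.S n → ℤˣ) :
    ∑ ω, Real.exp
        (kernelEnergy T J β isingρ h (n + 1) (extendBall T (n + 1) (mergeConf T n σ ω)))
      = (∏ y ∈ treeSphere T.root T.S (n + 1), prefactor (J * β) (h y)) *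
        Real.exp (kernelEnergy T J β isingρ (fieldRecursion T (Real.tanh (J * β)) h) n
          (extendBall T n σ)) := by
  rw [_root_.sum_exp_kernelEnergy_mergeConf, prod_sum_units_exp_treeSphere, kernelEnergy_eq,
    Real.exp_add]
  ring

theorem partFn_succ (J β : ℝ) (h : V → ℝ) (n : ℕ) :
    partFn T J β isingρ h (n + 1)
      = (∏ y ∈ treeSphere T.root T.S (n + 1), prefactor (J * β) (h y)) *
        partFn T J β isingρ (fieldRecursion T (Real.tanh (J * β)) h) n := by
  rw [partFn, ← sum_mergeConf, partFn, Finset.mul_sum]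
  exact Finset.sum_congr rfl fun σ _ => sum_exp_kernelEnergy_mergeConf T J β h n σ

theorem sum_kernel_mergeConf (J β : ℝ) (h : V → ℝ) (n : ℕ)
    (σ : treeBall T.root T.S n → ℤˣ) :
    ∑ ω, kernel T J β isingρ h (n + 1) (mergeConf T n σ ω)
      = kernel T J β isingρ (fieldRecursion T (Real.tanh (J * β)) h) n σ := by
  simp only [kernel]
  rw [← Finset.sum_div, sum_exp_kernelEnergy_mergeConf, partFn_succ,
    mul_div_mul_left _ _ (Finset.prod_pos fun y _ => prefactor_pos _ _).ne']

theorem eq_on_treeSphere_of_kernel_eq (J β : ℝ) {g h : V → ℝ} {n : ℕ}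
    (hK : ∀ σ, kernel T J β isingρ g n σ = kernel T J β isingρ h n σ) :
    ∀ x ∈ treeSphere T.root T.S n, g x = h x := by
  intro x hx
  have hconst : ∀ σ : treeBall T.root T.S n → ℤˣ,
      ∑ z ∈ treeSphere T.root T.S n, ((extendBall T n σ z : ℤ) : ℝ) * (g z - h z)
        = Real.log (partFn T J β isingρ g n) - Real.log (partFn T J β isingρ h n) := by
    intro σ
    have hlog := congrArg Real.log (hK σ)
    rw [log_kernel, log_kernel, kernelEnergy_eq, kernelEnergy_eq] at hlog
    simp only [mul_sub, Finset.sum_sub_distrib]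
    linarith
  let flip : treeBall T.root T.S n → ℤˣ := fun z => if (z : V) = x then -1 else 1
  have hdiff : ∀ z ∈ treeSphere T.root T.S n,
      (((extendBall T n 1 z : ℤ) : ℝ) - ((extendBall T n flip z : ℤ) : ℝ)) * (g z - h z)
        = if z = x then 2 * (g z - h z) else 0 := by
    intro z hz
    have hzB := treeSphere_subset_treeBall n hz
    split_ifs with hzx
    · subst hzx
      simp [extendBall, flip, hzB]
      norm_num
    · simp [extendBall, flip, hzB, hzx]
  have hzero := Finset.sum_congr rfl hdiff
  rw [Finset.sum_ite_eq', if_pos hx] at hzero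
  simp only [sub_mul, Finset.sum_sub_distrib, hconst, sub_self] at hzero
  linarith

end Ising

/-- For the Ising model (`ρ(σ,ω) = σω`) on the Cayley tree of order `k`, the
Boltzmann–Gibbs kernels with boundary fields `h` are consistent iff
`h_x = Σ_{y ∈ S(x)} f(h_y, θ)` for every vertex `x`, where `θ = tanh(Jβ)`. -/
theorem ising_kernels_consistent_iff (J β : ℝ) (h : V → ℝ) :
    (∀ (n : ℕ) (σ : treeBall T.root T.S n → ℤˣ),
        (∑ ω : treeSphere T.root T.S (n + 1) → ℤˣ,
            kernel T J β (fun u r => ((u : ℤ) : ℝ) * r) h (n + 1)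
              (mergeConf T n σ ω)) =
          kernel T J β (fun u r => ((u : ℤ) : ℝ) * r) h n σ) ↔
      ∀ x : V, h x = ∑ y ∈ T.S x, isingF (h y) (Real.tanh (J * β)) := by
  simp only [Ising.sum_kernel_mergeConf]
  constructor
  · intro hcons x
    obtain ⟨n, hx⟩ := T.reach x
    exact (Ising.eq_on_treeSphere_of_kernel_eq T J β (hcons n) x hx).symm
  · intro hrec n σ
    rw [show Ising.fieldRecursion T (Real.tanh (J * β)) h = h from funext fun x => (hrec x).symm]
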